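/- arXiv:1504.08223 — 2 statements merged into one kernel-verified Lean document; each statement's English description precedes it below -/
import Mathlib

section
/- Let 𝔛 be a Bourgain–Delbaen space with constant C = sup_q ‖i_q‖, and for q ≥ 0 set M_q = span{d_γ : γ ∈ Δ_q}. Then for all p, q ∈ ℕ∪{0} with p < q and all vectors x_ℓ ∈ M_ℓ (ℓ = 0, 1, …, q), one has ‖∑_{ℓ=0}^p x_ℓ‖ ≤ C · ‖∑_{ℓ=0}^q x_ℓ‖. Consequently (M_q)_{q=0}^∞ forms a finite dimensional decomposition of 𝔛. -/
open scoped ENNReal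
open Filter Topology

set_option maxHeartbeats 1000000
set_option synthInstance.maxHeartbeats 400000

noncomputable section

/-- `ℓ∞(Γ)`. -/
abbrev Linf (Γ : Type*) : Type _ := lp (fun _ : Γ => ℝ) ∞

namespace BD

variable {Γ : Type*}

/-- The evaluation map on `ℓ∞(Γ)`, as a linear map. -/
def evalLM (γ : Γ) : Linf Γ →ₗ[ℝ] ℝ where
  toFun f := f γ
  map_add' f g := by simp
  map_smul' c f := by simp

/-- The evaluation functional `e_γ^*` on `ℓ∞(Γ)`. -/
def evalL (γ : Γ) : Linf Γ →L[ℝ] ℝ :=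
  LinearMap.mkContinuous (evalLM γ) 1 fun f => by
    rw [one_mul]
    exact lp.norm_apply_le_norm ENNReal.top_ne_zero f γ

/-- The restriction map `ℓ∞(Γ) → ℓ∞(A)`, as a linear map. -/
def restrLM (A : Finset Γ) : Linf Γ →ₗ[ℝ] (↥A → ℝ) where
  toFun f γ := f γ.1
  map_add' f g := by ext γ; simp
  map_smul' c f := by ext γ; simp

/-- The restriction operator `r_A : ℓ∞(Γ) → ℓ∞(A)` for a finite set `A ⊆ Γ`. -/
def restrCLM (A : Finset Γ) : Linf Γ →L[ℝ] (↥A → ℝ) :=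
  LinearMap.mkContinuous (restrLM A) 1 fun f => by
    rw [one_mul]
    refine (pi_norm_le_iff_of_nonneg (norm_nonneg f)).2 fun γ => ?_
    exact lp.norm_apply_le_norm ENNReal.top_ne_zero f γ.1

/-- The data defining a Bourgain-Delbaen space: a strictly increasing sequence of
nonempty finite subsets of `Γ` covering `Γ`, together with a uniformly bounded compatible
sequence of extension operators. -/
structure System (Γ : Type*) where
  Γs : ℕ → Finset Γ
  strict : StrictMono Γs
  nonempty : ∀ q, (Γs q).Nonempty
  covers : ∀ γ : Γ, ∃ q, γ ∈ Γs q
  i : ∀ q, (↥(Γs q) → ℝ) →L[ℝ] Linf Γ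
  extension : ∀ q (x : ↥(Γs q) → ℝ) (γ : ↥(Γs q)), i q x γ.1 = x γ
  compat : ∀ p q, p < q → ∀ x : ↥(Γs p) → ℝ, i p x = i q (restrCLM (Γs q) (i p x))
  bdd : BddAbove (Set.range fun q => ‖i q‖)

/-- `C = sup_q ‖i_q‖`. -/
def System.C (S : System Γ) : ℝ := ⨆ q, ‖S.i q‖

/-- `Δ_0 = Γ_0`, `Δ_q = Γ_q \ Γ_{q-1}`. -/
def System.Δ (S : System Γ) : ℕ → Finset Γ := fun q =>
  letI := Classical.decEq Γ
  match q with
  | 0 => S.Γs 0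
  | q + 1 => S.Γs (q + 1) \ S.Γs q

/-- The unique `q` with `γ ∈ Δ_q`. -/
def System.rk (S : System Γ) (γ : Γ) : ℕ :=
  letI := Classical.decEq Γ
  Nat.find (S.covers γ)

/-- The vector `d_γ = i_q (e_γ)` for `γ ∈ Δ_q`. -/
def System.dvec (S : System Γ) (γ : Γ) : Linf Γ :=
  letI := Classical.decEq Γ
  S.i (S.rk γ) fun δ => if (δ : Γ) = γ then 1 else 0

/-- `M_q = span {d_γ : γ ∈ Δ_q}`. -/
def System.M (S : System Γ) (q : ℕ) : Submodule ℝ (Linf Γ) :=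
  Submodule.span ℝ (S.dvec '' (S.Δ q : Set Γ))

/-- The Bourgain-Delbaen space: the closed linear span of the `d_γ`'s in `ℓ∞(Γ)`. -/
def System.space (S : System Γ) : Submodule ℝ (Linf Γ) :=
  (Submodule.span ℝ (Set.range S.dvec)).topologicalClosure


section ShortcutInstances

noncomputable instance (priority := 10000) instLinfNACG (Γ : Type*) :
    NormedAddCommGroup (Linf Γ) := inferInstance

noncomputable instance (priority := 10000) instLinfNS (Γ : Type*) :
    NormedSpace ℝ (Linf Γ) := inferInstance

noncomputable instance (priority := 10000) instSpaceNACG (S : System Γ) :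
    NormedAddCommGroup ↥S.space := inferInstance

noncomputable instance (priority := 10000) instSpaceNS (S : System Γ) :
    NormedSpace ℝ ↥S.space := inferInstance

noncomputable instance (priority := 10000) instDualNACG (S : System Γ) :
    NormedAddCommGroup (↥S.space →L[ℝ] ℝ) := inferInstance

noncomputable instance (priority := 10000) instDualNS (S : System Γ) :
    NormedSpace ℝ (↥S.space →L[ℝ] ℝ) := inferInstance

end ShortcutInstances

lemma dvec_mem (S : System Γ) (γ : Γ) : S.dvec γ ∈ S.space :=
  Submodule.le_topologicalClosure _ (Submodule.subset_span ⟨γ, rfl⟩)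

end BD

namespace BDProof
open BD

variable {Γ : Type*} (S : BD.System Γ)

lemma norm_i_le_C (q : ℕ) : ‖S.i q‖ ≤ S.C := le_ciSup S.bdd q

lemma C_nonneg : 0 ≤ S.C := (norm_nonneg _).trans (norm_i_le_C S 0)

lemma restrCLM_apply (A : Finset Γ) (f : Linf Γ) (δ : ↥A) :
    restrCLM A f δ = f δ.1 := rfl

/-- The projection `P_q = i_q ∘ r_q`. -/
def P (q : ℕ) : Linf Γ →L[ℝ] Linf Γ := (S.i q).comp (restrCLM (S.Γs q))

lemma norm_restrCLM_le (A : Finset Γ) : ‖(restrCLM A : Linf Γ →L[ℝ] _)‖ ≤ 1 :=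
  LinearMap.mkContinuous_norm_le _ zero_le_one _

lemma norm_P_le (q : ℕ) : ‖P S q‖ ≤ S.C := by
  refine (ContinuousLinearMap.opNorm_comp_le _ _).trans ?_
  calc ‖S.i q‖ * ‖(restrCLM (S.Γs q) : Linf Γ →L[ℝ] _)‖
      ≤ S.C * 1 := mul_le_mul (norm_i_le_C S q) (norm_restrCLM_le _) (norm_nonneg _) (C_nonneg S)
    _ = S.C := mul_one _

lemma mem_Γs_rk (γ : Γ) : γ ∈ S.Γs (S.rk γ) := by
  letI := Classical.decEq Γ
  exact Nat.find_spec (S.covers γ)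

lemma not_mem_Γs_of_lt_rk {γ : Γ} {q : ℕ} (h : q < S.rk γ) : γ ∉ S.Γs q := by
  letI := Classical.decEq Γ
  exact Nat.find_min (S.covers γ) h

lemma rk_le_of_mem {γ : Γ} {q : ℕ} (h : γ ∈ S.Γs q) : S.rk γ ≤ q := by
  letI := Classical.decEq Γ
  exact Nat.find_le h

lemma mem_Δ_rk (γ : Γ) : γ ∈ S.Δ (S.rk γ) := by
  classical
  rcases hq : S.rk γ with _ | m
  · have := mem_Γs_rk S γ; rw [hq] at this; simpa [System.Δ] using this
  · have h1 := mem_Γs_rk S γ; rw [hq] at h1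
    have h2 : γ ∉ S.Γs m := not_mem_Γs_of_lt_rk S (by omega)
    simp [System.Δ, Finset.mem_sdiff, h1, h2]

lemma rk_eq_of_mem_Δ {γ : Γ} {q : ℕ} (h : γ ∈ S.Δ q) : S.rk γ = q := by
  classical
  cases q with
  | zero =>
      simp only [System.Δ] at h
      exact Nat.le_zero.mp (rk_le_of_mem S h)
  | succ m =>
      simp only [System.Δ, Finset.mem_sdiff] at h
      have h1 : S.rk γ ≤ m + 1 := rk_le_of_mem S h.1
      have h2 : m < S.rk γ := by
        by_contra hc
        exact h.2 (S.strict.monotone (by omega) (mem_Γs_rk S γ))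
      omega

lemma restr_i (q : ℕ) (x : ↥(S.Γs q) → ℝ) :
    restrCLM (S.Γs q) (S.i q x) = x := by
  funext δ; exact S.extension q x δ

lemma P_i (q : ℕ) (x : ↥(S.Γs q) → ℝ) : P S q (S.i q x) = S.i q x := by
  simp only [P, ContinuousLinearMap.comp_apply, restr_i]

lemma P_i_of_le {p q : ℕ} (h : p ≤ q) (x : ↥(S.Γs p) → ℝ) :
    P S q (S.i p x) = S.i p x := by
  rcases eq_or_lt_of_le h with rfl | h
  · exact P_i S _ x
  · simp only [P, ContinuousLinearMap.comp_apply]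
    exact (S.compat p q h x).symm

lemma dvec_def (γ : Γ) : S.dvec γ =
    S.i (S.rk γ) (fun δ => letI := Classical.decEq Γ
      if (δ : Γ) = γ then (1:ℝ) else 0) := rfl

lemma P_dvec_of_le {γ : Γ} {q : ℕ} (h : S.rk γ ≤ q) :
    P S q (S.dvec γ) = S.dvec γ := by
  rw [dvec_def]; exact P_i_of_le S h _

lemma P_dvec_of_gt {γ : Γ} {q : ℕ} (h : q < S.rk γ) :
    P S q (S.dvec γ) = 0 := by
  have hres : restrCLM (S.Γs q) (S.dvec γ) = 0 := by
    funext δ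
    have hmem : (δ : Γ) ∈ S.Γs (S.rk γ) := S.strict.monotone h.le δ.2
    have hne : (δ : Γ) ≠ γ := fun he => not_mem_Γs_of_lt_rk S h (he ▸ δ.2)
    rw [restrCLM_apply, dvec_def]
    rw [S.extension (S.rk γ)
      (fun δ' => letI := Classical.decEq Γ
        if (δ' : Γ) = γ then (1:ℝ) else 0) ⟨δ.1, hmem⟩]
    exact if_neg hne
  simp only [P, ContinuousLinearMap.comp_apply, hres, map_zero]

lemma P_M_of_le {ℓ q : ℕ} (h : ℓ ≤ q) {x : Linf Γ} (hx : x ∈ S.M ℓ) :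
    P S q x = x := by
  induction hx using Submodule.span_induction with
  | mem y hy =>
      obtain ⟨γ, hγ, rfl⟩ := hy
      exact P_dvec_of_le S ((rk_eq_of_mem_Δ S hγ).le.trans h)
  | zero => simp
  | add y z _ _ hy hz => simp [hy, hz]
  | smul a y _ hy => simp [hy]

lemma P_M_of_gt {ℓ q : ℕ} (h : q < ℓ) {x : Linf Γ} (hx : x ∈ S.M ℓ) :
    P S q x = 0 := by
  induction hx using Submodule.span_induction with
  | mem y hy =>
      obtain ⟨γ, hγ, rfl⟩ := hy
      exact P_dvec_of_gt S (by rw [rk_eq_of_mem_Δ S hγ]; exact h)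
  | zero => simp
  | add y z _ _ hy hz => simp [hy, hz]
  | smul a y _ hy => simp [hy]

/-- The difference projections `Q_0 = P_0`, `Q_{q+1} = P_{q+1} - P_q`. -/
def Q : ℕ → (Linf Γ →L[ℝ] Linf Γ)
  | 0 => P S 0
  | q + 1 => P S (q + 1) - P S q

lemma Q_M {ℓ q : ℕ} {x : Linf Γ} (hx : x ∈ S.M ℓ) :
    Q S q x = if ℓ = q then x else 0 := by
  cases q with
  | zero =>
      rcases Nat.eq_zero_or_pos ℓ with rfl | hl
      · simp [Q, P_M_of_le S le_rfl hx]
      · simp [Q, P_M_of_gt S hl hx, Nat.pos_iff_ne_zero.mp hl]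
  | succ m =>
      simp only [Q, ContinuousLinearMap.sub_apply]
      rcases lt_trichotomy ℓ (m + 1) with h | rfl | h
      · rw [P_M_of_le S (by omega) hx, P_M_of_le S (by omega) hx]
        simp [Nat.ne_of_lt h]
      · rw [P_M_of_le S le_rfl hx, P_M_of_gt S (by omega) hx]
        simp
      · rw [P_M_of_gt S h hx, P_M_of_gt S (by omega) hx]
        simp [Nat.ne_of_gt h]

lemma sum_Q (x : Linf Γ) (n : ℕ) :
    ∑ ℓ ∈ Finset.range (n + 1), Q S ℓ x = P S n x := by
  induction n with
  | zero => simp [Q]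
  | succ m ih =>
      rw [Finset.sum_range_succ, ih]
      simp [Q]

instance M_fd (q : ℕ) : FiniteDimensional ℝ ↥(S.M q) :=
  FiniteDimensional.span_of_finite ℝ (((S.Δ q).finite_toSet).image _)

lemma Q_mem_M (q : ℕ) {x : Linf Γ} (hx : x ∈ S.space) : Q S q x ∈ S.M q := by
  have hclosed : IsClosed ((S.M q : Set (Linf Γ))) :=
    (S.M q).closed_of_finiteDimensional
  have hle : Submodule.span ℝ (Set.range S.dvec) ≤ (S.M q).comap (Q S q : Linf Γ →ₗ[ℝ] Linf Γ) := by
    rw [Submodule.span_le]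
    rintro _ ⟨γ, rfl⟩
    have hd : S.dvec γ ∈ S.M (S.rk γ) :=
      Submodule.subset_span ⟨γ, mem_Δ_rk S γ, rfl⟩
    have := Q_M S (q := q) hd
    simp only [SetLike.mem_coe, Submodule.mem_comap, ContinuousLinearMap.coe_coe, this]
    split
    · next h => exact h ▸ hd
    · exact (S.M q).zero_mem
  have hcl : IsClosed (((S.M q).comap (Q S q : Linf Γ →ₗ[ℝ] Linf Γ) : Set (Linf Γ))) :=
    hclosed.preimage (Q S q).continuous
  exact (Submodule.topologicalClosure_minimal _ hle hcl) hx

lemma eventually_P_eq {z : Linf Γ} (hz : z ∈ Submodule.span ℝ (Set.range S.dvec)) :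
    ∃ N, ∀ n, N ≤ n → P S n z = z := by
  induction hz using Submodule.span_induction with
  | mem y hy =>
      obtain ⟨γ, rfl⟩ := hy
      exact ⟨S.rk γ, fun n hn => P_dvec_of_le S hn⟩
  | zero => exact ⟨0, fun n _ => by simp⟩
  | add y z _ _ hy hz =>
      obtain ⟨N1, h1⟩ := hy; obtain ⟨N2, h2⟩ := hz
      exact ⟨max N1 N2, fun n hn => by
        rw [map_add, h1 n (le_trans (le_max_left _ _) hn),
          h2 n (le_trans (le_max_right _ _) hn)]⟩
  | smul a y _ hy =>
      obtain ⟨N, h⟩ := hy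
      exact ⟨N, fun n hn => by rw [map_smul, h n hn]⟩

lemma tendsto_P {x : Linf Γ} (hx : x ∈ S.space) :
    Filter.Tendsto (fun n => P S n x) Filter.atTop (nhds x) := by
  rw [NormedAddCommGroup.tendsto_atTop]
  intro ε hε
  have hC2 : (0:ℝ) < S.C + 2 := by linarith [C_nonneg S]
  have hεC : 0 < ε / (S.C + 2) := div_pos hε hC2
  obtain ⟨z, hz, hzx⟩ : ∃ z ∈ Submodule.span ℝ (Set.range S.dvec), ‖x - z‖ < ε / (S.C + 2) := by
    have : x ∈ closure (Submodule.span ℝ (Set.range S.dvec) : Set (Linf Γ)) := hx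
    rcases Metric.mem_closure_iff.mp this (ε / (S.C + 2)) hεC with ⟨z, hz, hd⟩
    exact ⟨z, hz, by rwa [dist_eq_norm] at hd⟩
  obtain ⟨N, hN⟩ := eventually_P_eq S hz
  refine ⟨N, fun n hn => ?_⟩
  have : P S n x - x = P S n (x - z) + (z - x) := by
    rw [map_sub, hN n hn]; abel
  rw [this]
  calc ‖P S n (x - z) + (z - x)‖ ≤ ‖P S n (x - z)‖ + ‖z - x‖ := norm_add_le _ _
    _ ≤ S.C * ‖x - z‖ + ‖x - z‖ := by
        rw [norm_sub_rev z x]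
        gcongr
        exact (P S n).le_of_opNorm_le (norm_P_le S n) _
    _ = (S.C + 1) * ‖x - z‖ := by ring
    _ < (S.C + 2) * (ε / (S.C + 2)) := by
        apply mul_lt_mul' (by linarith) hzx (norm_nonneg _)
        linarith [C_nonneg S]
    _ = ε := by rw [mul_comm]; exact div_mul_cancel₀ ε (ne_of_gt hC2)

end BDProof

/-- In a Bourgain–Delbaen space, with `C = sup_q ‖i_q‖`, for all `p < q` and
vectors `x_ℓ ∈ M_ℓ` one has `‖∑_{ℓ≤p} x_ℓ‖ ≤ C ‖∑_{ℓ≤q} x_ℓ‖`; consequently `(M_q)_q` is a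
finite dimensional decomposition of the Bourgain–Delbaen space. -/
theorem statement0 {Γ : Type*} (S : BD.System Γ) :
    (∀ p q : ℕ, p < q → ∀ x : ℕ → Linf Γ, (∀ ℓ, ℓ ≤ q → x ℓ ∈ S.M ℓ) →
      ‖∑ ℓ ∈ Finset.range (p + 1), x ℓ‖ ≤ S.C * ‖∑ ℓ ∈ Finset.range (q + 1), x ℓ‖) ∧
    (∀ q, FiniteDimensional ℝ ↥(S.M q)) ∧
    (∀ x : Linf Γ, x ∈ S.space → ∃! xs : ℕ → Linf Γ,
      (∀ q, xs q ∈ S.M q) ∧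
      Filter.Tendsto (fun n => ∑ ℓ ∈ Finset.range n, xs ℓ) Filter.atTop (nhds x)) := by
  classical
  refine ⟨?_, fun q => BDProof.M_fd S q, ?_⟩
  · intro p q hpq x hx
    have hsum : BDProof.P S p (∑ ℓ ∈ Finset.range (q + 1), x ℓ)
        = ∑ ℓ ∈ Finset.range (p + 1), x ℓ := by
      rw [map_sum, ← Finset.sum_range_add_sum_Ico _ (show p + 1 ≤ q + 1 by omega)]
      have h1 : ∀ ℓ ∈ Finset.range (p + 1), BDProof.P S p (x ℓ) = x ℓ := by
        intro ℓ hℓ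
        have hℓp : ℓ ≤ p := Nat.lt_succ_iff.mp (Finset.mem_range.mp hℓ)
        exact BDProof.P_M_of_le S hℓp (hx ℓ (by omega))
      have h2 : ∀ ℓ ∈ Finset.Ico (p + 1) (q + 1), BDProof.P S p (x ℓ) = 0 := by
        intro ℓ hℓ
        obtain ⟨h3, h4⟩ := Finset.mem_Ico.mp hℓ
        exact BDProof.P_M_of_gt S (by omega) (hx ℓ (by omega))
      rw [Finset.sum_congr rfl h1, Finset.sum_congr rfl h2, Finset.sum_const_zero, add_zero]
    calc ‖∑ ℓ ∈ Finset.range (p + 1), x ℓ‖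
        = ‖BDProof.P S p (∑ ℓ ∈ Finset.range (q + 1), x ℓ)‖ := by rw [hsum]
      _ ≤ S.C * ‖∑ ℓ ∈ Finset.range (q + 1), x ℓ‖ :=
          (BDProof.P S p).le_of_opNorm_le (BDProof.norm_P_le S p) _
  · intro x hx
    refine ⟨fun q => BDProof.Q S q x, ⟨fun q => BDProof.Q_mem_M S q hx, ?_⟩, ?_⟩
    · have h1 : Filter.Tendsto (fun n : ℕ => BDProof.P S (n - 1) x) Filter.atTop (nhds x) :=
        (BDProof.tendsto_P S hx).comp (tendsto_sub_atTop_nat 1)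
      refine Filter.Tendsto.congr' ?_ h1
      filter_upwards [Filter.eventually_ge_atTop 1] with n hn
      obtain ⟨m, rfl⟩ : ∃ m, n = m + 1 := ⟨n - 1, by omega⟩
      rw [BDProof.sum_Q]
      simp
    · rintro ys ⟨hymem, hytend⟩
      funext q
      have h1 : Filter.Tendsto (fun n => BDProof.Q S q (∑ ℓ ∈ Finset.range n, ys ℓ))
          Filter.atTop (nhds (BDProof.Q S q x)) :=
        ((BDProof.Q S q).continuous.tendsto x).comp hytend
      have h2 : ∀ᶠ n in Filter.atTop,
          BDProof.Q S q (∑ ℓ ∈ Finset.range n, ys ℓ) = ys q := by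
        filter_upwards [Filter.eventually_ge_atTop (q + 1)] with n hn
        rw [map_sum, Finset.sum_congr rfl (fun ℓ _ => BDProof.Q_M S (hymem ℓ)),
          Finset.sum_ite_eq' (Finset.range n) q ys]
        exact if_pos (Finset.mem_range.mpr (by omega))
      exact (tendsto_nhds_unique (Filter.Tendsto.congr' h2 h1) tendsto_const_nhds).symm
end
end

section
/- Let X be an L_{∞,λ}-space, let Y be a subspace of X*, and assume there is θ > 0 such that θ‖x‖ ≤ sup{|y*(x)| : y* ∈ Y, ‖y*‖ ≤ 1} for all x ∈ X. Then for every finite-dimensional subspace F of X and every ε > 0 there exists a finite-rank bounded linear operator T : X → X such that: (i) ‖Tx − x‖ ≤ ε‖x‖ for all x ∈ F; (ii) ‖T‖ ≤ λ/θ; (iii) the adjoint satisfies T*[X*] ⊆ Y. In particular, if X is separable, then there exists a sequence of finite-rank operators T_n : X → X with T_n x → x for all x ∈ X and T_n*[X*] ⊆ Y for all n. -/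
open Filter Topology

noncomputable section

/-- A Banach space `X` is an `L_{∞,λ}`-space if every finite dimensional subspace is contained
in a finite dimensional subspace `G` which is `λ`-isomorphic to `ℓ∞^{dim G}`. -/
def IsLinftyCSpace (X : Type*) [NormedAddCommGroup X] [NormedSpace ℝ X] (C : ℝ) : Prop :=
  ∀ F : Submodule ℝ X, FiniteDimensional ℝ ↥F →
    ∃ G : Submodule ℝ X, F ≤ G ∧ FiniteDimensional ℝ ↥G ∧
      ∃ T : ↥G ≃L[ℝ] (Fin (Module.finrank ℝ ↥G) → ℝ),
        ‖(T : ↥G →L[ℝ] (Fin (Module.finrank ℝ ↥G) → ℝ))‖ *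
          ‖(T.symm : (Fin (Module.finrank ℝ ↥G) → ℝ) →L[ℝ] ↥G)‖ ≤ C

/-!
Take `G ⊇ F` with `T₀ : G ≃ ℓ∞ⁿ` and `‖T₀‖‖T₀⁻¹‖ ≤ λ`. The coordinate functionals of `T₀`
extend by Hahn–Banach to `fᵢ ∈ X*` with `‖fᵢ‖ ≤ ‖T₀‖`. Since `Y` is `θ`-norming, a separation
argument in the finite-dimensional space `F*` (Helly's lemma) gives `gᵢ ∈ Y` with
`‖gᵢ‖ ≤ ‖T₀‖ / θ` and `gᵢ` uniformly close to `fᵢ` on the unit ball of `F`. Then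
`T x = T₀⁻¹ (gᵢ x)ᵢ` works: `‖T‖ ≤ ‖T₀⁻¹‖‖T₀‖/θ`, `f ∘ T` is a combination of the `gᵢ`, and on `F`
we have `T x - x = T₀⁻¹ ((gᵢ - fᵢ) x)ᵢ`. In the separable case, apply this to the spans of the
first `n` points of a dense sequence with `ε = 1/(n+1)`; the uniform bound `λ/θ` upgrades
convergence on the dense sequence to convergence everywhere.
-/

theorem ContinuousLinearMap.exists_eq_apply_of_finiteDimensional {𝕜 E : Type*}
    [NontriviallyNormedField 𝕜] [CompleteSpace 𝕜] [NormedAddCommGroup E] [NormedSpace 𝕜 E]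
    [FiniteDimensional 𝕜 E] (ℓ : (E →L[𝕜] 𝕜) →L[𝕜] 𝕜) :
    ∃ z : E, ∀ h : E →L[𝕜] 𝕜, ℓ h = h z :=
  ⟨(Module.evalEquiv 𝕜 E).symm (ℓ.toLinearMap ∘ₗ LinearMap.toContinuousLinearMap.toLinearMap),
    fun h => (Module.apply_evalEquiv_symm_apply 𝕜 E (h : E →ₗ[𝕜] 𝕜)
      (ℓ.toLinearMap ∘ₗ LinearMap.toContinuousLinearMap.toLinearMap)).symm⟩

section Norming

variable {X : Type*} [NormedAddCommGroup X] [NormedSpace ℝ X] {Y : Submodule ℝ (X →L[ℝ] ℝ)}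
  {θ : ℝ}

theorem mul_norm_le_of_norming
    (hnorming : ∀ x : X, θ * ‖x‖ ≤ ⨆ y : {y : X →L[ℝ] ℝ // y ∈ Y ∧ ‖y‖ ≤ 1}, |y.1 x|)
    {z : X} {r : ℝ} (h : ∀ y ∈ Y, ‖y‖ ≤ 1 → |y z| ≤ r) : θ * ‖z‖ ≤ r :=
  have : Nonempty {y : X →L[ℝ] ℝ // y ∈ Y ∧ ‖y‖ ≤ 1} := ⟨⟨0, Y.zero_mem, by simp⟩⟩
  (hnorming z).trans (ciSup_le fun y => h y.1 y.2.1 y.2.2)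

theorem exists_mem_norm_le_approx_on_finiteDimensional (hθ : 0 < θ)
    (hnorming : ∀ x : X, θ * ‖x‖ ≤ ⨆ y : {y : X →L[ℝ] ℝ // y ∈ Y ∧ ‖y‖ ≤ 1}, |y.1 x|)
    (F : Submodule ℝ X) [FiniteDimensional ℝ F] (f : X →L[ℝ] ℝ) {δ : ℝ} (hδ : 0 < δ) :
    ∃ g ∈ Y, ‖g‖ ≤ ‖f‖ / θ ∧ ∀ x ∈ F, |g x - f x| ≤ δ * ‖x‖ := by
  rcases eq_or_ne f 0 with rfl | hf
  · exact ⟨0, Y.zero_mem, by simp, fun x _ => by simp; positivity⟩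
  set c := ‖f‖ / θ
  have hc : 0 < c := div_pos (norm_pos_iff.2 hf) hθ
  let R : (X →L[ℝ] ℝ) →L[ℝ] (F →L[ℝ] ℝ) := (ContinuousLinearMap.compL ℝ F X ℝ).flip F.subtypeL
  set s := R '' (Y ∩ Metric.closedBall 0 c)
  have hRf : R f ∈ closure s := by
    by_contra hRf
    have hs : Convex ℝ s := (Y.convex.inter (convex_closedBall 0 c)).linear_image R.toLinearMap
    obtain ⟨ℓ, u, hlt, hgt⟩ := geometric_hahn_banach_closed_point hs.closure isClosed_closure hRf
    -- `F` is reflexive, so the separating functional is evaluation at some `z ∈ F`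
    obtain ⟨z, hz⟩ := ℓ.exists_eq_apply_of_finiteDimensional
    have hYz : ∀ y ∈ Y, ‖y‖ ≤ 1 → |y z| ≤ u / c := by
      intro y hy hy1
      have hcy : ∀ w ∈ Y, ‖w‖ ≤ 1 → c * w z < u := fun w hw hw1 => by
        have hmem : R (c • w) ∈ s := ⟨c • w, ⟨Y.smul_mem c hw, by
          simpa [norm_smul, abs_of_pos hc] using mul_le_of_le_one_right hc.le hw1⟩, rfl⟩
        simpa [hz, R] using hlt _ (subset_closure hmem)
      have h₁ := hcy y hy hy1
      have h₂ := hcy (-y) (Y.neg_mem hy) (by simpa using hy1)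
      rw [neg_apply, mul_neg] at h₂
      rw [le_div_iff₀ hc, ← abs_of_pos hc, ← abs_mul, mul_comm]
      exact abs_le.2 ⟨by linarith, h₁.le⟩
    have hfz : f z ≤ u := calc
      f z ≤ ‖f‖ * ‖z‖ := (le_abs_self _).trans (f.le_opNorm z)
      _ = c * (θ * ‖z‖) := by simp only [c]; field_simp
      _ ≤ c * (u / c) := by gcongr; exact mul_norm_le_of_norming hnorming hYz
      _ = u := by field_simp
    exact hfz.not_gt (by simpa [hz, R] using hgt)
  obtain ⟨_, ⟨g, ⟨hgY, hg⟩, rfl⟩, hdist⟩ := (Metric.mem_closure_iff (α := F →L[ℝ] ℝ)).1 hRf δ hδ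
  refine ⟨g, hgY, by simpa using hg, fun x hx => ?_⟩
  calc |g x - f x| = ‖(R g - R f) ⟨x, hx⟩‖ := rfl
    _ ≤ ‖R g - R f‖ * ‖x‖ := (R g - R f).le_opNorm _
    _ ≤ δ * ‖x‖ := by gcongr; exact (dist_eq_norm' (R f) (R g) ▸ hdist).le

variable {ι : Type*} [Fintype ι] {G : Submodule ℝ X}

def operatorOfCoords (T₀ : G ≃L[ℝ] (ι → ℝ)) (g : ι → X →L[ℝ] ℝ) : X →L[ℝ] X :=
  G.subtypeL ∘L (T₀.symm : (ι → ℝ) →L[ℝ] G) ∘L ContinuousLinearMap.pi g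

theorem finiteDimensional_range_operatorOfCoords (T₀ : G ≃L[ℝ] (ι → ℝ)) (g : ι → X →L[ℝ] ℝ) :
    FiniteDimensional ℝ (LinearMap.range (operatorOfCoords T₀ g : X →ₗ[ℝ] X)) :=
  Submodule.finiteDimensional_of_le <| LinearMap.range_comp_le_range
    (ContinuousLinearMap.pi g : X →ₗ[ℝ] ι → ℝ)
    (G.subtypeL ∘L (T₀.symm : (ι → ℝ) →L[ℝ] G) : (ι → ℝ) →ₗ[ℝ] X)

theorem norm_operatorOfCoords_le (T₀ : G ≃L[ℝ] (ι → ℝ)) {g : ι → X →L[ℝ] ℝ} {C : ℝ}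
    (hg : ∀ i, ‖g i‖ ≤ C) (hC : 0 ≤ C) :
    ‖operatorOfCoords T₀ g‖ ≤ ‖(T₀.symm : (ι → ℝ) →L[ℝ] G)‖ * C :=
  calc ‖operatorOfCoords T₀ g‖
      ≤ ‖G.subtypeL‖ * (‖(T₀.symm : (ι → ℝ) →L[ℝ] G)‖ * ‖ContinuousLinearMap.pi g‖) :=
        (ContinuousLinearMap.opNorm_comp_le _ _).trans
          (by gcongr; exact ContinuousLinearMap.opNorm_comp_le _ _)
    _ ≤ 1 * (‖(T₀.symm : (ι → ℝ) →L[ℝ] G)‖ * C) := by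
        gcongr
        · exact Submodule.norm_subtypeL_le G
        · exact ContinuousLinearMap.norm_pi_le_of_le hg hC
    _ = ‖(T₀.symm : (ι → ℝ) →L[ℝ] G)‖ * C := one_mul _

theorem comp_operatorOfCoords_mem (T₀ : G ≃L[ℝ] (ι → ℝ)) {g : ι → X →L[ℝ] ℝ}
    (hg : ∀ i, g i ∈ Y) (f : X →L[ℝ] ℝ) : f.comp (operatorOfCoords T₀ g) ∈ Y := by
  classical
  have : f.comp (operatorOfCoords T₀ g) =
      ∑ i, f (T₀.symm fun j => if i = j then 1 else 0) • g i := by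
    ext x
    simpa [operatorOfCoords, mul_comm] using LinearMap.pi_apply_eq_sum_univ
      (f ∘L G.subtypeL ∘L (T₀.symm : (ι → ℝ) →L[ℝ] G) : (ι → ℝ) →ₗ[ℝ] ℝ) fun i => g i x
  rw [this]
  exact Y.sum_mem fun i _ => Y.smul_mem _ (hg i)

theorem norm_operatorOfCoords_apply_sub_le (T₀ : G ≃L[ℝ] (ι → ℝ)) (g : ι → X →L[ℝ] ℝ)
    {f : ι → X →L[ℝ] ℝ} (hf : ∀ i (x : G), f i x = T₀ x i) {x : X} (hx : x ∈ G) :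
    ‖operatorOfCoords T₀ g x - x‖ ≤
      ‖(T₀.symm : (ι → ℝ) →L[ℝ] G)‖ * ‖fun i => g i x - f i x‖ := by
  have hx' : (T₀.symm fun i => f i x) = ⟨x, hx⟩ := by
    rw [show (fun i => f i x) = T₀ ⟨x, hx⟩ from funext fun i => hf i ⟨x, hx⟩,
      T₀.symm_apply_apply]
  calc ‖operatorOfCoords T₀ g x - x‖
      = ‖(T₀.symm : (ι → ℝ) →L[ℝ] G) ((fun i => g i x) - fun i => f i x)‖ := by
        rw [map_sub, ContinuousLinearEquiv.coe_coe, hx']; rfl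
    _ ≤ ‖(T₀.symm : (ι → ℝ) →L[ℝ] G)‖ * ‖fun i => g i x - f i x‖ :=
        ContinuousLinearMap.le_opNorm _ _

theorem exists_finiteRank_approx_of_linftyEquiv (hθ : 0 < θ)
    (hnorming : ∀ x : X, θ * ‖x‖ ≤ ⨆ y : {y : X →L[ℝ] ℝ // y ∈ Y ∧ ‖y‖ ≤ 1}, |y.1 x|)
    {F : Submodule ℝ X} [FiniteDimensional ℝ F] (hFG : F ≤ G) (T₀ : G ≃L[ℝ] (ι → ℝ))
    {ε : ℝ} (hε : 0 < ε) :
    ∃ T : X →L[ℝ] X, FiniteDimensional ℝ (LinearMap.range (T : X →ₗ[ℝ] X)) ∧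
      (∀ x ∈ F, ‖T x - x‖ ≤ ε * ‖x‖) ∧
      ‖T‖ ≤ ‖(T₀ : G →L[ℝ] (ι → ℝ))‖ * ‖(T₀.symm : (ι → ℝ) →L[ℝ] G)‖ / θ ∧
      ∀ f : X →L[ℝ] ℝ, f.comp T ∈ Y := by
  set A := ‖(T₀ : G →L[ℝ] (ι → ℝ))‖
  set B := ‖(T₀.symm : (ι → ℝ) →L[ℝ] G)‖
  have hcoord : ∀ i, ‖(ContinuousLinearMap.proj i).comp (T₀ : G →L[ℝ] (ι → ℝ))‖ ≤ A := fun i =>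
    ContinuousLinearMap.opNorm_le_bound _ (by positivity) fun x =>
      (norm_le_pi_norm (T₀ x) i).trans ((T₀ : G →L[ℝ] (ι → ℝ)).le_opNorm x)
  choose f hfG hf using fun i =>
    exists_extension_norm_eq G ((ContinuousLinearMap.proj i).comp (T₀ : G →L[ℝ] (ι → ℝ)))
  have hδ : 0 < ε / (B + 1) := by positivity
  choose g hgY hg hgf using fun i =>
    exists_mem_norm_le_approx_on_finiteDimensional hθ hnorming F (f i) hδ
  refine ⟨operatorOfCoords T₀ g, finiteDimensional_range_operatorOfCoords T₀ g,
    fun x hx => ?_, ?_, comp_operatorOfCoords_mem T₀ hgY⟩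
  · calc ‖operatorOfCoords T₀ g x - x‖ ≤ B * ‖fun i => g i x - f i x‖ :=
          norm_operatorOfCoords_apply_sub_le T₀ g hfG (hFG hx)
      _ ≤ B * (ε / (B + 1) * ‖x‖) := by
          gcongr
          exact (pi_norm_le_iff_of_nonneg (by positivity)).2 fun i => hgf i x hx
      _ ≤ ε * ‖x‖ := by
          rw [← mul_assoc, mul_div_assoc']
          gcongr
          rw [div_le_iff₀ (by positivity)]
          nlinarith
  · have hgA : ∀ i, ‖g i‖ ≤ A / θ := fun i =>
      (hg i).trans (div_le_div_of_nonneg_right ((hf i).trans_le (hcoord i)) hθ.le)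
    calc ‖operatorOfCoords T₀ g‖ ≤ B * (A / θ) :=
          norm_operatorOfCoords_le T₀ hgA (by positivity)
      _ = A * B / θ := by ring

end Norming

theorem exists_finiteRank_approx_of_isLinftyCSpace {X : Type*} [NormedAddCommGroup X]
    [NormedSpace ℝ X] {lam : ℝ} (hX : IsLinftyCSpace X lam) {Y : Submodule ℝ (X →L[ℝ] ℝ)}
    {θ : ℝ} (hθ : 0 < θ)
    (hnorming : ∀ x : X, θ * ‖x‖ ≤ ⨆ y : {y : X →L[ℝ] ℝ // y ∈ Y ∧ ‖y‖ ≤ 1}, |y.1 x|)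
    (F : Submodule ℝ X) [FiniteDimensional ℝ F] {ε : ℝ} (hε : 0 < ε) :
    ∃ T : X →L[ℝ] X, FiniteDimensional ℝ (LinearMap.range (T : X →ₗ[ℝ] X)) ∧
      (∀ x ∈ F, ‖T x - x‖ ≤ ε * ‖x‖) ∧ ‖T‖ ≤ lam / θ ∧ ∀ f : X →L[ℝ] ℝ, f.comp T ∈ Y := by
  obtain ⟨G, hFG, -, T₀, hT₀⟩ := hX F inferInstance
  obtain ⟨T, hrange, happrox, hnorm, hY⟩ :=
    exists_finiteRank_approx_of_linftyEquiv hθ hnorming hFG T₀ hε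
  exact ⟨T, hrange, happrox, hnorm.trans (div_le_div_of_nonneg_right hT₀ hθ.le), hY⟩

theorem ContinuousLinearMap.tendsto_apply_of_dense_of_norm_le {𝕜 E F ι : Type*}
    [NontriviallyNormedField 𝕜] [SeminormedAddCommGroup E] [NormedSpace 𝕜 E]
    [SeminormedAddCommGroup F] [NormedSpace 𝕜 F] {l : Filter ι} {T : ι → E →L[𝕜] F} {C : ℝ}
    (hT : ∀ i, ‖T i‖ ≤ C) (A : E →L[𝕜] F) {s : Set E} (hs : Dense s)
    (h : ∀ x ∈ s, Tendsto (T · x) l (𝓝 (A x))) (x : E) : Tendsto (T · x) l (𝓝 (A x)) := by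
  have hT : Equicontinuous ((↑) ∘ T) :=
    ((NormedSpace.equicontinuous_TFAE T).out 5 1).1 (⟨C, hT⟩ : ∃ C, ∀ i, ‖T i‖ ≤ C)
  have hclosed := hT.isClosed_setOfPred_tendsto (l := l) A.continuous
  exact hclosed.closure_subset_iff.2 h (hs.closure_eq ▸ Set.mem_univ x)

theorem exists_seq_tendsto_of_forall_approx {X : Type*} [NormedAddCommGroup X] [NormedSpace ℝ X]
    [TopologicalSpace.SeparableSpace X] (P : (X →L[ℝ] X) → Prop) {C : ℝ}
    (h : ∀ F : Submodule ℝ X, FiniteDimensional ℝ F → ∀ ε : ℝ, 0 < ε →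
      ∃ T : X →L[ℝ] X, P T ∧ (∀ x ∈ F, ‖T x - x‖ ≤ ε * ‖x‖) ∧ ‖T‖ ≤ C) :
    ∃ T : ℕ → X →L[ℝ] X, (∀ n, P (T n)) ∧ ∀ x, Tendsto (T · x) atTop (𝓝 x) := by
  obtain ⟨u, hu⟩ := TopologicalSpace.exists_dense_seq X
  choose T hP hT hTC using fun m : ℕ =>
    h (Submodule.span ℝ (u '' Set.Iic m))
      (FiniteDimensional.span_of_finite ℝ ((Set.finite_Iic m).image u))
      (1 / (m + 1)) Nat.one_div_pos_of_nat
  refine ⟨T, hP, ContinuousLinearMap.tendsto_apply_of_dense_of_norm_le hTC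
    (ContinuousLinearMap.id ℝ X) hu ?_⟩
  rintro _ ⟨k, rfl⟩
  rw [tendsto_iff_norm_sub_tendsto_zero]
  refine squeeze_zero' (Eventually.of_forall fun m => norm_nonneg _)
    (eventually_atTop.2 ⟨k, fun m hm => hT m (u k) (Submodule.subset_span ⟨k, hm, rfl⟩)⟩) ?_
  simpa using (tendsto_one_div_add_atTop_nhds_zero_nat (𝕜 := ℝ)).mul_const ‖u k‖

theorem statement12_general {X : Type*} [NormedAddCommGroup X] [NormedSpace ℝ X]
    (lam : ℝ) (hX : IsLinftyCSpace X lam)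
    (Y : Submodule ℝ (X →L[ℝ] ℝ)) (θ : ℝ) (hθ : 0 < θ)
    (hnorming : ∀ x : X, θ * ‖x‖ ≤ ⨆ y : {y : X →L[ℝ] ℝ // y ∈ Y ∧ ‖y‖ ≤ 1}, |y.1 x|) :
    (∀ F : Submodule ℝ X, FiniteDimensional ℝ ↥F → ∀ ε : ℝ, 0 < ε →
      ∃ T : X →L[ℝ] X, FiniteDimensional ℝ ↥(LinearMap.range (T : X →ₗ[ℝ] X)) ∧
        (∀ x ∈ F, ‖T x - x‖ ≤ ε * ‖x‖) ∧
        ‖T‖ ≤ lam / θ ∧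
        (∀ f : X →L[ℝ] ℝ, f.comp T ∈ Y)) ∧
    (TopologicalSpace.SeparableSpace X →
      ∃ T : ℕ → (X →L[ℝ] X),
        (∀ n, FiniteDimensional ℝ ↥(LinearMap.range (T n : X →ₗ[ℝ] X))) ∧
        (∀ x : X, Tendsto (fun n => T n x) atTop (nhds x)) ∧
        (∀ n (f : X →L[ℝ] ℝ), f.comp (T n) ∈ Y)) := by
  have approx : ∀ F : Submodule ℝ X, FiniteDimensional ℝ F → ∀ ε : ℝ, 0 < ε →
      ∃ T : X →L[ℝ] X, FiniteDimensional ℝ (LinearMap.range (T : X →ₗ[ℝ] X)) ∧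
        (∀ x ∈ F, ‖T x - x‖ ≤ ε * ‖x‖) ∧ ‖T‖ ≤ lam / θ ∧ ∀ f : X →L[ℝ] ℝ, f.comp T ∈ Y :=
    fun F _ _ hε => exists_finiteRank_approx_of_isLinftyCSpace hX hθ hnorming F hε
  refine ⟨approx, fun _ => ?_⟩
  obtain ⟨T, hT, hlim⟩ := exists_seq_tendsto_of_forall_approx
    (fun T : X →L[ℝ] X => FiniteDimensional ℝ (LinearMap.range (T : X →ₗ[ℝ] X)) ∧
      ∀ f : X →L[ℝ] ℝ, f.comp T ∈ Y)
    fun F hF ε hε => by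
      obtain ⟨T, hrange, happrox, hnorm, hY⟩ := approx F hF ε hε
      exact ⟨T, ⟨hrange, hY⟩, happrox, hnorm⟩
  exact ⟨T, fun n => (hT n).1, hlim, fun n => (hT n).2⟩

/-- Let `X` be an `L_{∞,λ}`-space and `Y` a subspace of `X^*` norming `X` up
to a constant `θ > 0`.  Then for every finite dimensional `F ⊆ X` and `ε > 0` there is a finite
rank operator `T : X → X` with `‖Tx - x‖ ≤ ε‖x‖` on `F`, `‖T‖ ≤ λ/θ` and `T^*[X^*] ⊆ Y`.
In particular, if `X` is separable there is a sequence of finite rank operators `T_n` with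
`T_n x → x` for all `x` and `T_n^*[X^*] ⊆ Y` for all `n`. -/
theorem statement12 {X : Type*} [NormedAddCommGroup X] [NormedSpace ℝ X] [CompleteSpace X]
    (lam : ℝ) (hlam : 1 ≤ lam) (hX : IsLinftyCSpace X lam)
    (Y : Submodule ℝ (X →L[ℝ] ℝ)) (θ : ℝ) (hθ : 0 < θ)
    (hnorming : ∀ x : X, θ * ‖x‖ ≤ ⨆ y : {y : X →L[ℝ] ℝ // y ∈ Y ∧ ‖y‖ ≤ 1}, |y.1 x|) :
    (∀ F : Submodule ℝ X, FiniteDimensional ℝ ↥F → ∀ ε : ℝ, 0 < ε →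
      ∃ T : X →L[ℝ] X, FiniteDimensional ℝ ↥(LinearMap.range (T : X →ₗ[ℝ] X)) ∧
        (∀ x ∈ F, ‖T x - x‖ ≤ ε * ‖x‖) ∧
        ‖T‖ ≤ lam / θ ∧
        (∀ f : X →L[ℝ] ℝ, f.comp T ∈ Y)) ∧
    (TopologicalSpace.SeparableSpace X →
      ∃ T : ℕ → (X →L[ℝ] X),
        (∀ n, FiniteDimensional ℝ ↥(LinearMap.range (T n : X →ₗ[ℝ] X))) ∧
        (∀ x : X, Tendsto (fun n => T n x) atTop (nhds x)) ∧
        (∀ n (f : X →L[ℝ] ℝ), f.comp (T n) ∈ Y)) :=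
  statement12_general lam hX Y θ hθ hnorming
end
end
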